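/- arXiv:2512.09241 — 2 statements merged into one kernel-verified Lean document; each statement's English description precedes it below -/
import Mathlib

section
/- Let m < m' be positive integers and let M_{m,m'} = ℕ/⟨m = m'⟩ be the monoid ℕ modulo the congruence generated by (m, m'). For natural numbers s, t, if s = t in M_{m,m'}, then either s = t < m, or both s ≥ m, t ≥ m and (m' - m) divides s - t. -/
/-- The additive congruence on `ℕ` generated by identifying `m` and `m'`;
its quotient is the monoid `M_{m,m'} = ℕ/⟨m = m'⟩`. -/
def natCon (m m' : ℕ) : AddCon ℕ := addConGen fun a b => a = m ∧ b = m'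

/-- Explicit congruence bounding `natCon`. -/
def boundCon (m m' : ℕ) : AddCon ℕ where
  r s t := s = t ∨ (m ≤ s ∧ m ≤ t ∧ ((m' : ℤ) - m) ∣ ((s : ℤ) - t))
  iseqv := by
    constructor
    · intro x; left; rfl
    · rintro x y (rfl | ⟨hx, hy, d⟩)
      · left; rfl
      · right; exact ⟨hy, hx, by simpa using d.neg_right⟩
    · rintro x y z (rfl | ⟨hx, hy, d⟩) (rfl | ⟨hy', hz, d'⟩)
      · left; rfl
      · right; exact ⟨hy', hz, d'⟩
      · right; exact ⟨hx, hy, d⟩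
      · right; refine ⟨hx, hz, ?_⟩
        have := d.add d'
        simpa using this
  add' := by
    rintro a b c d (rfl | ⟨ha, hb, dv⟩) (rfl | ⟨hc, hd, dv'⟩)
    · left; rfl
    · right
      refine ⟨le_add_left hc, le_add_left hd, ?_⟩
      push_cast
      simpa using dv'
    · right
      refine ⟨le_add_right ha, le_add_right hb, ?_⟩
      push_cast
      simpa using dv
    · right
      refine ⟨le_add_right ha, le_add_right hb, ?_⟩
      push_cast
      have : ((m' : ℤ) - m) ∣ ((a : ℤ) - b) + ((c : ℤ) - d) := dv.add dv'
      convert this using 1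
      ring

/-- If `s = t` in `M_{m,m'}`, then either `s = t < m`, or both `s ≥ m`, `t ≥ m`
and `m' - m` divides `s - t`. -/
theorem stmt_6 {m m' : ℕ} (hm : 0 < m) (hmm : m < m') (s t : ℕ)
    (h : natCon m m' s t) :
    (s = t ∧ t < m) ∨ (m ≤ s ∧ m ≤ t ∧ ((m' : ℤ) - m) ∣ ((s : ℤ) - t)) := by
  have hle : natCon m m' ≤ boundCon m m' := by
    refine AddCon.addConGen_le.mpr ?_
    rintro a b ⟨rfl, rfl⟩
    right
    exact ⟨le_refl _, hmm.le, ⟨-1, by ring⟩⟩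
  rcases hle h with rfl | ⟨hs, ht, d⟩
  · rcases lt_or_ge s m with hlt | hge
    · exact Or.inl ⟨rfl, hlt⟩
    · exact Or.inr ⟨hge, hge, by simp⟩
  · exact Or.inr ⟨hs, ht, d⟩
end

section
/- Let m < m' and n < n' be positive integers with m ≥ n. The assignment 1 ↦ k extends to a well-defined monoid homomorphism M_{m,m'} → M_{n,n'} whenever k·m ≥ n and (m'-m)·k is a multiple of (n'-n). -/
lemma natCon_step {n n' : ℕ} (hnn : n ≤ n') {a : ℕ} (ha : n ≤ a) :
    natCon n n' a (a + (n' - n)) := by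
  have hbase : natCon n n' n n' := AddConGen.Rel.of _ _ ⟨rfl, rfl⟩
  have := (natCon n n').add (AddCon.refl _ (a - n)) hbase
  have e1 : a - n + n = a := Nat.sub_add_cancel ha
  have e2 : a - n + n' = a + (n' - n) := by omega
  rwa [e1, e2] at this

lemma natCon_iter {n n' : ℕ} (hnn : n ≤ n') {a : ℕ} (ha : n ≤ a) (t : ℕ) :
    natCon n n' a (a + t * (n' - n)) := by
  induction t with
  | zero => simpa using AddCon.refl _ a
  | succ s ih =>
      refine (natCon n n').trans ih ?_
      have := natCon_step hnn (a := a + s * (n' - n)) (by omega)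
      have e : a + s * (n' - n) + (n' - n) = a + (s + 1) * (n' - n) := by ring
      rwa [e] at this

/-- For `m < m'`, `n < n'` with `m ≥ n`, the assignment `1 ↦ k` extends to a
well-defined monoid homomorphism `M_{m,m'} → M_{n,n'}` (i.e. `j ↦ j*k` factors
through the congruence) whenever `k*m ≥ n` and `(n'-n) ∣ (m'-m)*k`. -/
theorem stmt_8 {m m' n n' k : ℕ} (hm : 0 < m) (hmm : m < m')
    (hn : 0 < n) (hnn : n < n') (hmn : n ≤ m) (hk : 0 < k)
    (h1 : n ≤ k * m) (h2 : (n' - n) ∣ (m' - m) * k) :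
    ∃ φ : (natCon m m').Quotient →+ (natCon n n').Quotient,
      ∀ j : ℕ, φ ((natCon m m').mk' j) = (natCon n n').mk' (j * k) := by
  obtain ⟨t, ht⟩ := h2
  have f : ℕ →+ (natCon n n').Quotient :=
    ((natCon n n').mk').comp (AddMonoidHom.mulRight k)
  refine ⟨(natCon m m').lift (((natCon n n').mk').comp (AddMonoidHom.mulRight k)) ?_, ?_⟩
  · refine AddCon.addConGen_le.mpr ?_
    rintro a b ⟨rfl, rfl⟩
    show (natCon n n').mk' (a * k) = (natCon n n').mk' (b * k)
    have key := natCon_iter (le_of_lt hnn)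
      (a := a * k) (by rw [Nat.mul_comm]; exact h1) t
    have hle : a * k ≤ b * k := Nat.mul_le_mul_right k (le_of_lt hmm)
    have e : a * k + t * (n' - n) = b * k := by
      have hsub : b * k - a * k = t * (n' - n) := by
        rw [← Nat.sub_mul, ht, Nat.mul_comm]
      omega
    rw [e] at key
    exact ((natCon n n').eq).mpr key
  · intro j
    rfl
end
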